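/- (Lemma 1) Let p be an odd prime, d ≥ 2 with d ∣ p−1, f = (p−1)/d. For every 0 ≤ ν ≤ d−1 and every k ≥ 1: n(k+1,ν) = Σ_{l=0}^{d−1} (ν,l) · n(k,l) + f·δ_{θν} · n(k−1,0). -/

import Mathlib

open Finset

/-- The Gauss period `η_i = Σ_{u=0}^{f-1} ζ^{ω^{du+i}}`. -/
noncomputable def gaussPeriod (p d f : ℕ) (ω : (ZMod p)ˣ) (ζ : ℂ) (i : ℕ) : ℂ :=
  ∑ u ∈ Finset.range f, ζ ^ (((ω : ZMod p) ^ (d * u + i)).val)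

/-- The cyclotomic number `(i,j)` of order `d`. -/
noncomputable def cycNum (p d f : ℕ) (ω : (ZMod p)ˣ) (i j : ℕ) : ℕ :=
  Nat.card {uv : ℕ × ℕ // uv.1 < f ∧ uv.2 < f ∧
    (1 : ZMod p) + (ω : ZMod p) ^ (d * uv.1 + i) = (ω : ZMod p) ^ (d * uv.2 + j)}

/-- The cyclotomic integer `n(k,ν) = Σ_{i=0}^{d-1} η_i^k · η_{i+ν}`. -/
noncomputable def nInt (p d f : ℕ) (ω : (ZMod p)ˣ) (ζ : ℂ) (k ν : ℕ) : ℂ :=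
  ∑ i ∈ Finset.range d, (gaussPeriod p d f ω ζ i) ^ k * gaussPeriod p d f ω ζ (i + ν)

/-- `θ = 0` if `f` is even, `θ = d/2` if `f` is odd. -/
def theta (d f : ℕ) : ℕ := if Even f then 0 else d / 2

/-- `N(k,a)`: the number of `k`-tuples of nonzero `d`-th powers summing to `a`. -/
noncomputable def waringCount (p d k : ℕ) (a : ZMod p) : ℕ :=
  Nat.card {t : Fin k → ZMod p //
    (∀ i, ∃ b : (ZMod p)ˣ, ((b : ZMod p)) ^ d = t i) ∧ ∑ i, t i = a}

/-- `s_d(p,a)`: the least `k ≥ 1` such that `a` is a sum of `k` nonzero `d`-th powers. -/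
noncomputable def sWaring (p d : ℕ) (a : ZMod p) : ℕ :=
  sInf {k | 1 ≤ k ∧ ∃ u : Fin k → (ZMod p)ˣ, a = ∑ i, ((u i : ZMod p)) ^ d}

/-- `g_d(p) = max_{a ∈ 𝔽_p^*} s_d(p,a)`. -/
noncomputable def gWaring (p d : ℕ) : ℕ :=
  sSup {s | ∃ a : (ZMod p)ˣ, s = sWaring p d (a : ZMod p)}

/-- Product of a chain of cyclotomic numbers `(a,x₁)(x₁,x₂)⋯(xₘ,b)`. -/
noncomputable def chainProd (c : ℕ → ℕ → ℕ) (a b : ℕ) : List ℕ → ℕ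
  | [] => c a b
  | x :: xs => c a x * chainProd c x b xs

/-- Sum over all chains of `m` intermediate indices `0 ≤ i < d` of the products
`(a,i₂)(i₂,i₃)⋯(i_{m+1},b)` of consecutive cyclotomic numbers. -/
noncomputable def chainSum (d : ℕ) (c : ℕ → ℕ → ℕ) (a b m : ℕ) : ℕ :=
  ∑ v : Fin m → Fin d, chainProd c a b (List.ofFn fun i => ((v i : ℕ)))

/-!
Substituting `u ↦ u + w` in the second factor, `η_i η_{i+ν} = Σ_w Σ_u ζ^{ω^{du+i} (1 + ω^{dw+ν})}`.
For each `w`, either `1 + ω^{dw+ν} = 0`, and the inner sum is `f`, or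
`1 + ω^{dw+ν} = ω^{dv+l}` for a unique `v < f`, `l < d`, and the inner sum is `η_{i+l}`.
Since `-1 = ω^{(p-1)/2}` and `(p-1)/2 ≡ θ (mod d)`, the first case occurs for exactly one `w`
if `ν = θ` and never otherwise; by definition of the cyclotomic numbers the second case occurs
`(ν,l)` times for each `l`. Hence `η_i η_{i+ν} = Σ_l (ν,l) η_{i+l} + f δ_{θν}`; multiplying by
`η_i^k` and summing over `i` gives the recurrence.
-/

theorem Function.Periodic.sum_range_add {M : Type*} [AddCancelCommMonoid M] {g : ℕ → M} {f : ℕ}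
    (hg : Function.Periodic g f) (v : ℕ) :
    ∑ u ∈ range f, g (u + v) = ∑ u ∈ range f, g u := by
  induction v with
  | zero => simp
  | succ v ih =>
    rw [← ih]
    apply add_right_cancel (b := g v)
    calc ∑ u ∈ range f, g (u + (v + 1)) + g v
        = ∑ u ∈ range (f + 1), g (u + v) := by
          rw [sum_range_succ']; simp only [add_right_comm _ 1 v, add_assoc, zero_add]
      _ = ∑ u ∈ range f, g (u + v) + g v := by
          rw [sum_range_succ, add_comm f v, hg v]

theorem ZMod.isPrimitiveRoot_of_forall_exists_pow {p : ℕ} [Fact p.Prime] {ω : (ZMod p)ˣ}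
    (hω : ∀ x : (ZMod p)ˣ, ∃ n : ℕ, ω ^ n = x) : IsPrimitiveRoot (ω : ZMod p) (p - 1) := by
  have h := orderOf_eq_card_of_forall_mem_powers fun x => (Submonoid.mem_powers_iff x ω).2 (hω x)
  rw [Nat.card_eq_fintype_card, ZMod.card_units, ← orderOf_units] at h
  exact h ▸ IsPrimitiveRoot.orderOf _

namespace IsPrimitiveRoot

theorem pow_mul_add_inj {M : Type*} [CommMonoid M] {ξ : M} {d f : ℕ}
    (h : IsPrimitiveRoot ξ (d * f)) {v w l m : ℕ} (hv : v < f) (hw : w < f) (hl : l < d)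
    (hm : m < d) (H : ξ ^ (d * v + l) = ξ ^ (d * w + m)) : v = w ∧ l = m := by
  have hlt : ∀ {v l}, v < f → l < d → d * v + l < d * f := fun hv hl => by nlinarith
  have := h.pow_inj (hlt hv hl) (hlt hw hm) H
  have hd : 0 < d := by omega
  refine ⟨?_, ?_⟩
  · simpa [Nat.mul_add_div hd, Nat.div_eq_of_lt hl, Nat.div_eq_of_lt hm] using
      congrArg (· / d) this
  · simpa [Nat.mul_add_mod, Nat.mod_eq_of_lt hl, Nat.mod_eq_of_lt hm] using
      congrArg (· % d) this

theorem exists_pow_mul_add_eq {R : Type*} [CommRing R] [IsDomain R] {ξ x : R} {d f : ℕ}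
    (h : IsPrimitiveRoot ξ (d * f)) (hdf : d * f ≠ 0) (hx : x ^ (d * f) = 1) :
    ∃ v < f, ∃ l < d, ξ ^ (d * v + l) = x := by
  have : NeZero (d * f) := ⟨hdf⟩
  obtain ⟨i, hi, rfl⟩ := h.eq_pow_of_pow_eq_one hx
  have hd : 0 < d := Nat.pos_of_ne_zero (left_ne_zero_of_mul hdf)
  refine ⟨i / d, Nat.div_lt_of_lt_mul hi, i % d, Nat.mod_lt i hd, ?_⟩
  rw [Nat.div_add_mod]

theorem pow_half_eq_neg_one {R : Type*} [CommRing R] [NoZeroDivisors R] {ξ : R} {n : ℕ}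
    (h : IsPrimitiveRoot ξ n) (hn : n ≠ 0) (heven : Even n) : ξ ^ (n / 2) = -1 := by
  obtain ⟨k, rfl⟩ := heven
  have hk : k ≠ 0 := by omega
  have h2 := h.pow_of_dvd hk (Dvd.intro_left 2 (two_mul k))
  rw [← two_mul, Nat.mul_div_cancel _ (Nat.pos_of_ne_zero hk)] at h2
  rw [← two_mul, Nat.mul_div_cancel_left _ two_pos]
  exact h2.eq_neg_one_of_two_right

end IsPrimitiveRoot

section GaussPeriod

variable {p d f : ℕ} {ω : (ZMod p)ˣ} {ζ : ℂ}

theorem gaussPeriod_eq_sum_add (hω : (ω : ZMod p) ^ (d * f) = 1) (c v : ℕ) :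
    ∑ u ∈ range f, ζ ^ ((ω : ZMod p) ^ (d * (u + v) + c)).val = gaussPeriod p d f ω ζ c := by
  refine Function.Periodic.sum_range_add (g := fun u => ζ ^ ((ω : ZMod p) ^ (d * u + c)).val)
    (fun u => ?_) v
  simp only [mul_add, add_right_comm _ (d * f), pow_add _ _ (d * f), hω, mul_one]

theorem sum_pow_val_mul_pow (hω : (ω : ZMod p) ^ (d * f) = 1) (i v l : ℕ) :
    ∑ u ∈ range f, ζ ^ ((ω : ZMod p) ^ (d * u + i) * (ω : ZMod p) ^ (d * v + l)).val
      = gaussPeriod p d f ω ζ (i + l) := by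
  rw [← gaussPeriod_eq_sum_add hω (i + l) v]
  refine sum_congr rfl fun u _ => ?_
  rw [← pow_add, show d * u + i + (d * v + l) = d * (u + v) + (i + l) by ring]

theorem gaussPeriod_mul_gaussPeriod_eq_sum [NeZero p] (hζ : ζ ^ p = 1)
    (hω : (ω : ZMod p) ^ (d * f) = 1) (i ν : ℕ) :
    gaussPeriod p d f ω ζ i * gaussPeriod p d f ω ζ (i + ν)
      = ∑ w ∈ range f, ∑ u ∈ range f,
          ζ ^ ((ω : ZMod p) ^ (d * u + i) * (1 + (ω : ZMod p) ^ (d * w + ν))).val := by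
  have hψ : ∀ x y : ZMod p, ζ ^ (x + y).val = ζ ^ x.val * ζ ^ y.val :=
    (AddChar.zmodChar p hζ).map_add_eq_mul
  rw [sum_comm, gaussPeriod, sum_mul]
  refine sum_congr rfl fun u _ => ?_
  rw [← gaussPeriod_eq_sum_add hω (i + ν) u, mul_sum]
  refine sum_congr rfl fun w _ => ?_
  rw [mul_one_add, hψ, ← pow_add (ω : ZMod p),
    show d * u + i + (d * w + ν) = d * (w + u) + (i + ν) by ring]

theorem sum_pow_val_mul_eq [Fact p.Prime] (hω : IsPrimitiveRoot (ω : ZMod p) (d * f))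
    (hdf : d * f = p - 1) (i : ℕ) (c : ZMod p) :
    ∑ u ∈ range f, ζ ^ ((ω : ZMod p) ^ (d * u + i) * c).val
      = (if c = 0 then (f : ℂ) else 0)
        + ∑ l ∈ range d, ∑ v ∈ range f,
            if c = (ω : ZMod p) ^ (d * v + l) then gaussPeriod p d f ω ζ (i + l) else 0 := by
  by_cases hc : c = 0
  · simp [hc, eq_comm (a := (0 : ZMod p))]
  have hdf0 : d * f ≠ 0 := by have := (Fact.out : p.Prime).two_le; omega
  obtain ⟨v₀, hv₀, l₀, hl₀, rfl⟩ :=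
    hω.exists_pow_mul_add_eq hdf0 (hdf ▸ ZMod.pow_card_sub_one_eq_one hc)
  rw [if_neg hc, zero_add, sum_pow_val_mul_pow hω.pow_eq_one,
    sum_eq_single_of_mem l₀ (mem_range.2 hl₀), sum_eq_single_of_mem v₀ (mem_range.2 hv₀),
    if_pos rfl]
  · exact fun v hv hne => if_neg fun H =>
      hne (hω.pow_mul_add_inj hv₀ (mem_range.1 hv) hl₀ hl₀ H).1.symm
  · exact fun l hl hne => sum_eq_zero fun v hv => if_neg fun H =>
      hne (hω.pow_mul_add_inj hv₀ (mem_range.1 hv) hl₀ (mem_range.1 hl) H).2.symm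

theorem cycNum_eq_card (i j : ℕ) :
    cycNum p d f ω i j = #{wv ∈ range f ×ˢ range f |
      1 + (ω : ZMod p) ^ (d * wv.1 + i) = (ω : ZMod p) ^ (d * wv.2 + j)} := by
  rw [cycNum, ← Nat.card_eq_finsetCard]
  exact Nat.card_congr (Equiv.subtypeEquivRight fun wv => by simp [and_assoc])

theorem theta_lt (hd : 0 < d) : theta d f < d := by
  unfold theta; split_ifs <;> omega

theorem exists_half_eq_mul_add_theta (hf : 0 < f) (heven : Even (d * f)) :
    ∃ w < f, d * f / 2 = d * w + theta d f := by
  unfold theta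
  split_ifs with hfe
  · obtain ⟨g, rfl⟩ := hfe
    refine ⟨g, by omega, ?_⟩
    rw [show d * (g + g) = 2 * (d * g) by ring, Nat.mul_div_cancel_left _ two_pos, add_zero]
  · obtain ⟨g, rfl⟩ := Nat.not_even_iff_odd.1 hfe
    obtain ⟨e, rfl⟩ := (Nat.even_mul.1 heven).resolve_right hfe
    refine ⟨g, by omega, ?_⟩
    rw [show (e + e) / 2 = e by omega, show (e + e) * (2 * g + 1) = 2 * ((e + e) * g + e) by ring,
      Nat.mul_div_cancel_left _ two_pos]

theorem card_filter_one_add_pow_eq_zero [Fact p.Prime] (hω : IsPrimitiveRoot (ω : ZMod p) (d * f))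
    (hdf : d * f ≠ 0) (heven : Even (d * f)) {ν : ℕ} (hν : ν < d) :
    #{w ∈ range f | 1 + (ω : ZMod p) ^ (d * w + ν) = 0} = if theta d f = ν then 1 else 0 := by
  have hd : 0 < d := Nat.pos_of_ne_zero (left_ne_zero_of_mul hdf)
  obtain ⟨w₀, hw₀, hhalf⟩ :=
    exists_half_eq_mul_add_theta (Nat.pos_of_ne_zero (right_ne_zero_of_mul hdf)) heven
  have hneg : (ω : ZMod p) ^ (d * w₀ + theta d f) = -1 :=
    hhalf ▸ hω.pow_half_eq_neg_one hdf heven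
  have hzero : ∀ w < f, 1 + (ω : ZMod p) ^ (d * w + ν) = 0 ↔ w = w₀ ∧ theta d f = ν := by
    intro w hw
    rw [add_eq_zero_iff_eq_neg', ← hneg]
    constructor
    · intro H
      obtain ⟨rfl, hθ⟩ := hω.pow_mul_add_inj hw hw₀ hν (theta_lt hd) H
      exact ⟨rfl, hθ.symm⟩
    · rintro ⟨rfl, rfl⟩
      rfl
  rw [filter_congr fun w hw => hzero w (mem_range.1 hw)]
  split_ifs with h <;> simp [h, hw₀]

theorem gaussPeriod_mul_gaussPeriod [Fact p.Prime] (hζ : ζ ^ p = 1)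
    (hω : IsPrimitiveRoot (ω : ZMod p) (d * f)) (hdf : d * f = p - 1) (heven : Even (d * f))
    (i : ℕ) {ν : ℕ} (hν : ν < d) :
    gaussPeriod p d f ω ζ i * gaussPeriod p d f ω ζ (i + ν)
      = ∑ l ∈ range d, (cycNum p d f ω ν l : ℂ) * gaussPeriod p d f ω ζ (i + l)
        + f * (if theta d f = ν then 1 else 0) := by
  have hdf0 : d * f ≠ 0 := by have := (Fact.out : p.Prime).two_le; omega
  have hcycNum : ∀ l, ∑ w ∈ range f, ∑ v ∈ range f,
      (if 1 + (ω : ZMod p) ^ (d * w + ν) = (ω : ZMod p) ^ (d * v + l)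
        then gaussPeriod p d f ω ζ (i + l) else 0)
      = cycNum p d f ω ν l * gaussPeriod p d f ω ζ (i + l) := fun l => by
    rw [← sum_product', ← sum_filter, sum_const, cycNum_eq_card, nsmul_eq_mul]
  rw [gaussPeriod_mul_gaussPeriod_eq_sum hζ hω.pow_eq_one]
  simp_rw [sum_pow_val_mul_eq hω hdf]
  rw [sum_add_distrib, ← sum_filter, sum_const,
    card_filter_one_add_pow_eq_zero hω hdf0 heven hν, sum_comm]
  simp_rw [hcycNum]
  split_ifs <;> simp [add_comm]

theorem nInt_add_two_of_mul_eq (c : ℕ → ℂ) (e : ℂ) (ν : ℕ)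
    (h : ∀ i, gaussPeriod p d f ω ζ i * gaussPeriod p d f ω ζ (i + ν)
      = ∑ l ∈ range d, c l * gaussPeriod p d f ω ζ (i + l) + e) (k : ℕ) :
    nInt p d f ω ζ (k + 2) ν
      = ∑ l ∈ range d, c l * nInt p d f ω ζ (k + 1) l + e * nInt p d f ω ζ k 0 := by
  simp only [nInt, mul_sum, add_zero]
  rw [sum_comm, ← sum_add_distrib]
  refine sum_congr rfl fun i _ => ?_
  rw [pow_succ, mul_assoc, h, mul_add, mul_sum]
  congr 1
  · exact sum_congr rfl fun l _ => by ring
  · ring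

end GaussPeriod

theorem nInt_recurrence_general (p d f : ℕ) (hp : p.Prime) (hodd : Odd p)
    (hdvd : d ∣ p - 1) (hf : f = (p - 1) / d)
    (ω : (ZMod p)ˣ) (hω : ∀ x : (ZMod p)ˣ, ∃ n : ℕ, ω ^ n = x)
    (ζ : ℂ) (hζ : IsPrimitiveRoot ζ p)
    (ν : ℕ) (hν : ν < d) (k : ℕ) (hk : 1 ≤ k) :
    nInt p d f ω ζ (k + 1) ν
      = ∑ l ∈ Finset.range d, (cycNum p d f ω ν l : ℂ) * nInt p d f ω ζ k l
        + (f : ℂ) * (if theta d f = ν then 1 else 0) * nInt p d f ω ζ (k - 1) 0 := by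
  have : Fact p.Prime := ⟨hp⟩
  have hdf : d * f = p - 1 := hf ▸ Nat.mul_div_cancel' hdvd
  have hω' : IsPrimitiveRoot (ω : ZMod p) (d * f) :=
    hdf ▸ ZMod.isPrimitiveRoot_of_forall_exists_pow hω
  have heven : Even (d * f) := hdf ▸ Nat.Odd.sub_odd hodd odd_one
  obtain ⟨j, rfl⟩ := Nat.exists_eq_add_of_le' hk
  exact nInt_add_two_of_mul_eq _ _ ν
    (fun i => gaussPeriod_mul_gaussPeriod hζ.pow_eq_one hω' hdf heven i hν) j

/-- Lemma 1: `n(k+1,ν) = Σ_{l=0}^{d-1}(ν,l)·n(k,l) + f·δ_{θν}·n(k−1,0)`. -/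
theorem nInt_recurrence (p d f : ℕ) (hp : p.Prime) (hodd : Odd p)
    (hd : 2 ≤ d) (hdvd : d ∣ p - 1) (hf : f = (p - 1) / d)
    (ω : (ZMod p)ˣ) (hω : ∀ x : (ZMod p)ˣ, ∃ n : ℕ, ω ^ n = x)
    (ζ : ℂ) (hζ : IsPrimitiveRoot ζ p)
    (ν : ℕ) (hν : ν < d) (k : ℕ) (hk : 1 ≤ k) :
    nInt p d f ω ζ (k + 1) ν
      = ∑ l ∈ Finset.range d, (cycNum p d f ω ν l : ℂ) * nInt p d f ω ζ k l
        + (f : ℂ) * (if theta d f = ν then 1 else 0) * nInt p d f ω ζ (k - 1) 0 :=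
  nInt_recurrence_general p d f hp hodd hdvd hf ω hω ζ hζ ν hν k hk
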